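/- arXiv:1203.5350 — 3 statements merged into one kernel-verified Lean document; each statement's English description precedes it below -/
import Mathlib

section
/- Let L be a modular lattice and d ∈ L a fixed element. For the pairing e_d(x,y) := d ∧ (x ∨ y), and for any a ∈ L with d ≤ a (where a acts on L by x ↦ a ∧ x), we have e_d(a ∧ x, y) = e_d(x, a ∧ y) for all x, y ∈ L. -/
/-- Bilinearity of the lattice pairing `e_d(x,y) = d ⊓ (x ⊔ y)` in a modular
lattice, under the meet-action of elements of the interval `[d, ⊤]`. -/
theorem lattice_pairing_bilinear {L : Type*} [Lattice L] [IsModularLattice L]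
    (d a : L) (ha : d ≤ a) (x y : L) :
    d ⊓ ((a ⊓ x) ⊔ y) = d ⊓ (x ⊔ (a ⊓ y)) := by
  have key : ∀ u v : L, a ⊓ ((a ⊓ u) ⊔ v) = (a ⊓ u) ⊔ (a ⊓ v) := by
    intro u v
    rw [inf_comm a ((a ⊓ u) ⊔ v), sup_inf_assoc_of_le v inf_le_left, inf_comm v a]
  calc d ⊓ ((a ⊓ x) ⊔ y) = d ⊓ (a ⊓ ((a ⊓ x) ⊔ y)) := by
        rw [← inf_assoc, inf_eq_left.mpr ha]
    _ = d ⊓ ((a ⊓ x) ⊔ (a ⊓ y)) := by rw [key]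
    _ = d ⊓ (a ⊓ ((a ⊓ y) ⊔ x)) := by rw [key, sup_comm]
    _ = d ⊓ (x ⊔ (a ⊓ y)) := by rw [← inf_assoc, inf_eq_left.mpr ha, sup_comm]
end

section
/- Let L be a modular lattice, d ∈ L, and a, b ∈ L with d ≤ a and d ≤ b. Then for all x, y ∈ L: d ∧ ((a ∧ x) ∨ (b ∧ y)) = d ∧ (x ∨ (a ∧ b ∧ y)) = d ∧ ((b ∧ x) ∨ (a ∧ y)). -/
private theorem latK {L : Type*} [Lattice L] [IsModularLattice L]
    {d c z : L} (hd : d ≤ c) (hz : z ≤ c) (x : L) :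
    d ⊓ (x ⊔ z) = d ⊓ ((c ⊓ x) ⊔ z) := by
  rw [inf_sup_assoc_of_le x hz, ← inf_assoc, inf_eq_left.2 hd]

private theorem latK' {L : Type*} [Lattice L] [IsModularLattice L]
    {d c u : L} (hd : d ≤ c) (hu : u ≤ c) (z : L) :
    d ⊓ (u ⊔ z) = d ⊓ (u ⊔ (c ⊓ z)) := by
  rw [sup_comm u z, sup_comm u (c ⊓ z)]
  exact latK hd hu z

private theorem lat1 {L : Type*} [Lattice L] [IsModularLattice L]
    (d a b : L) (ha : d ≤ a) (hb : d ≤ b) (x y : L) :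
    d ⊓ ((a ⊓ x) ⊔ (b ⊓ y)) = d ⊓ (x ⊔ (a ⊓ b ⊓ y)) := by
  rw [latK ha (le_trans inf_le_left inf_le_left) x, inf_assoc a b y,
    ← latK' ha inf_le_left (b ⊓ y)]

/-- Full bilinearity of the lattice pairing `e_d(x,y) = d ⊓ (x ⊔ y)` in a
modular lattice: the action of `a, b ∈ [d, ⊤]` can be moved freely between
the two coordinates. -/
theorem lattice_pairing_bilinear_both {L : Type*} [Lattice L] [IsModularLattice L]
    (d a b : L) (ha : d ≤ a) (hb : d ≤ b) (x y : L) :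
    d ⊓ ((a ⊓ x) ⊔ (b ⊓ y)) = d ⊓ (x ⊔ (a ⊓ b ⊓ y)) ∧
    d ⊓ (x ⊔ (a ⊓ b ⊓ y)) = d ⊓ ((b ⊓ x) ⊔ (a ⊓ y)) := by
  refine ⟨lat1 d a b ha hb x y, ?_⟩
  rw [lat1 d b a hb ha x y, inf_comm a b]
end

section
/- Let L be a distributive lattice and d ∈ L. Then for all Q, r, P, s ∈ L with d ≤ r and d ≤ s: d ∧ ((Q ∧ r) ∨ (P ∧ s)) = (Q ∧ d) ∨ (P ∧ d). In particular the lattice pairing value e_d(Q ∧ r, P ∧ s) is independent of the secret elements r and s. -/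
/-- On a distributive lattice the lattice pairing value
`e_d(Q ⊓ r, P ⊓ s) = d ⊓ ((Q ⊓ r) ⊔ (P ⊓ s))` is independent of the secrets
`r, s ∈ [d, ⊤]`: it equals the public element `(Q ⊓ d) ⊔ (P ⊓ d)`. -/
theorem distrib_pairing_insecure {L : Type*} [DistribLattice L]
    (d Q r P s : L) (hr : d ≤ r) (hs : d ≤ s) :
    d ⊓ ((Q ⊓ r) ⊔ (P ⊓ s)) = (Q ⊓ d) ⊔ (P ⊓ d) := by
  rw [inf_sup_left]
  congr 1
  · rw [inf_inf_distrib_left, inf_eq_left.2 hr, inf_assoc, inf_comm Q d, ← inf_assoc, inf_idem, inf_comm]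
  · rw [inf_inf_distrib_left, inf_eq_left.2 hs, inf_assoc, inf_comm P d, ← inf_assoc, inf_idem, inf_comm]
end
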